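/- Consider the planar ODE system α' = C/r^{n−1} − n sin(α)/r, r' = cos(α), with n ≥ 3 an integer and C a real constant. Then the function E(α, r) = 2rⁿ sin(α) − C r² is a first integral: along any solution (α(s), r(s)) with r(s) > 0, d/ds E(α(s), r(s)) = 0. -/

import Mathlib

open Real

/-- Along the vector field `(α', r') = (C / r^(n-1) - n sin α / r, cos α)` the derivative
`∂E/∂α · α' + ∂E/∂r · r'` of `E = 2 rⁿ sin α - C r²` vanishes. -/
lemma firstIntegral_lieDeriv_eq_zero {n : ℕ} (hn : 1 ≤ n) (C a x : ℝ) (hx : x ≠ 0) :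
    2 * x ^ n * cos a * (C / x ^ (n - 1) - n * sin a / x)
      + (2 * n * x ^ (n - 1) * sin a - 2 * C * x) * cos a = 0 := by
  obtain ⟨m, rfl⟩ := Nat.exists_eq_add_of_le' hn
  simp only [Nat.add_sub_cancel]
  field_simp
  push_cast
  ring

/-- `E(α,r) = 2rⁿ sin α − Cr²` is a first integral of the system
`α' = C/r^{n−1} − n sin α / r`, `r' = cos α`. -/
theorem stmt_9 (n : ℕ) (hn : 3 ≤ n) (C : ℝ) (α r : ℝ → ℝ)
    (hrpos : ∀ s, 0 < r s)
    (hα : ∀ s, HasDerivAt α (C / (r s) ^ (n - 1) - n * Real.sin (α s) / r s) s)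
    (hr : ∀ s, HasDerivAt r (Real.cos (α s)) s) :
    ∀ s, HasDerivAt (fun t => 2 * (r t) ^ n * Real.sin (α t) - C * (r t) ^ 2) 0 s := by
  intro s
  have hE := ((((hr s).pow n).const_mul 2).mul (hα s).sin).sub (((hr s).pow 2).const_mul C)
  refine hE.congr_deriv ?_
  simp only [Pi.pow_apply]
  linear_combination
    firstIntegral_lieDeriv_eq_zero (by omega : 1 ≤ n) C (α s) (r s) (hrpos s).ne'
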